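/- arXiv:1806.00445 — 2 statements merged into one kernel-verified Lean document; each statement's English description precedes it below -/
import Mathlib

section
/- Partition refinement of the scenario decomposition bound: with the setting of the two-stage problem v above, for a subset S₀ of scenarios define v_{S₀} = min over x ∈ X, (y_s)_{s∈S₀} ≥ 0 of (∑_{s∈S₀} π_s) c·x + ∑_{s∈S₀} π_s c_s·y_s subject to A x ≥ a and T x + W y_s ≥ h_s for all s ∈ S₀. If {S_n} is a partition of the scenario set, then ∑_s π_s v_s ≤ ∑_n v_{S_n} ≤ v. -/
open Finset in
/-- Partition refinement of the scenario decomposition bound: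
`∑_s π_s v_s ≤ ∑_n v_{S_n} ≤ v` for any partition `{S_n}` of the scenario set. -/
theorem scenario_partition_bounds
    (n m p q S N : ℕ)
    (X : Set (Fin n → ℝ))
    (c : (Fin n → ℝ) →ₗ[ℝ] ℝ)
    (cs : Fin S → ((Fin m → ℝ) →ₗ[ℝ] ℝ))
    (A : (Fin n → ℝ) →ₗ[ℝ] (Fin p → ℝ)) (a : Fin p → ℝ)
    (T : (Fin n → ℝ) →ₗ[ℝ] (Fin q → ℝ))
    (W : (Fin m → ℝ) →ₗ[ℝ] (Fin q → ℝ))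
    (h : Fin S → (Fin q → ℝ))
    (π : Fin S → ℝ)
    (hπpos : ∀ s, 0 < π s)
    (hπsum : ∑ s, π s = 1)
    (P : Fin N → Finset (Fin S))
    (hdisj : ∀ i j, i ≠ j → Disjoint (P i) (P j))
    (hcover : ∀ s, ∃ i, s ∈ P i)
    (v : ℝ)
    (hv : IsLeast {r : ℝ | ∃ (x : Fin n → ℝ) (y : Fin S → (Fin m → ℝ)),
        x ∈ X ∧ (∀ s i, 0 ≤ y s i) ∧ (∀ i, a i ≤ A x i) ∧
        (∀ s i, h s i ≤ T x i + W (y s) i) ∧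
        r = c x + ∑ s, π s * cs s (y s)} v)
    (vdet : Fin S → ℝ)
    (hvdet : ∀ s, IsLeast {r : ℝ | ∃ (x : Fin n → ℝ) (y : Fin m → ℝ),
        x ∈ X ∧ (∀ i, 0 ≤ y i) ∧ (∀ i, a i ≤ A x i) ∧
        (∀ i, h s i ≤ T x i + W y i) ∧
        r = c x + cs s y} (vdet s))
    (vpart : Fin N → ℝ)
    (hvpart : ∀ i, IsLeast {r : ℝ | ∃ (x : Fin n → ℝ) (y : Fin S → (Fin m → ℝ)),
        x ∈ X ∧ (∀ s ∈ P i, ∀ j, 0 ≤ y s j) ∧ (∀ j, a j ≤ A x j) ∧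
        (∀ s ∈ P i, ∀ j, h s j ≤ T x j + W (y s) j) ∧
        r = (∑ s ∈ P i, π s) * c x + ∑ s ∈ P i, π s * cs s (y s)} (vpart i)) :
    ∑ s, π s * vdet s ≤ ∑ i, vpart i ∧ ∑ i, vpart i ≤ v := by

  -- partition sum lemma
  have hbU : (Finset.univ : Finset (Fin N)).biUnion P = Finset.univ := by
    ext s; simp [hcover s]
  have hsum : ∀ f : Fin S → ℝ, ∑ s, f s = ∑ i, ∑ s ∈ P i, f s := by
    intro f
    rw [← hbU, Finset.sum_biUnion]
    intro i _ j _ hij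
    exact hdisj i j hij
  constructor
  · -- lower bound
    rw [hsum (fun s => π s * vdet s)]
    apply Finset.sum_le_sum
    intro i _
    obtain ⟨⟨x, y, hx, hy, hA, hT, hr⟩, _⟩ := hvpart i
    rw [hr, Finset.sum_mul, ← Finset.sum_add_distrib]
    apply Finset.sum_le_sum
    intro s hs
    rw [← mul_add]
    apply mul_le_mul_of_nonneg_left _ (hπpos s).le
    exact (hvdet s).2 ⟨x, y s, hx, hy s hs, hA, hT s hs, rfl⟩
  · -- upper bound
    obtain ⟨⟨x, y, hx, hy, hA, hT, hr⟩, _⟩ := hv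
    have hfeas : ∀ i, vpart i ≤ (∑ s ∈ P i, π s) * c x + ∑ s ∈ P i, π s * cs s (y s) := by
      intro i
      exact (hvpart i).2 ⟨x, y, hx, fun s _ => hy s, hA, fun s _ => hT s, rfl⟩
    calc ∑ i, vpart i ≤ ∑ i, ((∑ s ∈ P i, π s) * c x + ∑ s ∈ P i, π s * cs s (y s)) :=
          Finset.sum_le_sum fun i _ => hfeas i
      _ = v := by
          rw [Finset.sum_add_distrib, ← Finset.sum_mul, ← hsum π, hπsum, one_mul,
            ← hsum (fun s => π s * cs s (y s)), hr]
end

section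
/- Time-window propagation is valid: suppose outage start weeks W_k (integers) satisfy W_{k+1} ≥ W_k + Da_k + L_k for all k, where Da_k ≥ 0 are outage durations and L_k ≥ 0 are minimal campaign lengths, together with To_k ≤ W_k ≤ Ta_k. Define T̃o_k recursively by T̃o_0 = To_0 and T̃o_{k+1} = max(To_{k+1}, T̃o_k + Da_k + L_{k+1}), and T̃a_k by T̃a_K = Ta_K and T̃a_k = min(Ta_k, T̃a_{k+1} - Da_k - L_{k+1}). Then every feasible sequence (W_k) satisfies T̃o_k ≤ W_k ≤ T̃a_k for all k. -/
/-- Time-window propagation is a valid preprocessing: the tightened windows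
`[T̃o_k, T̃a_k]` still contain every feasible outage-start sequence `(W_k)`. -/
theorem time_window_propagation_valid
    (K : ℕ) (W Da L To Ta To' Ta' : ℕ → ℤ)
    (hDa : ∀ k, 0 ≤ Da k)
    (hL : ∀ k, 0 ≤ L k)
    (hspacing : ∀ k, W k + Da k + L (k + 1) ≤ W (k + 1))
    (hTo : ∀ k, To k ≤ W k)
    (hTa : ∀ k, W k ≤ Ta k)
    (hTo'0 : To' 0 = To 0)
    (hTo'rec : ∀ k, To' (k + 1) = max (To (k + 1)) (To' k + Da k + L (k + 1)))
    (hTa'K : Ta' K = Ta K)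
    (hTa'rec : ∀ k, k < K → Ta' k = min (Ta k) (Ta' (k + 1) - Da k - L (k + 1))) :
    ∀ k, k ≤ K → To' k ≤ W k ∧ W k ≤ Ta' k := by
  have hfwd : ∀ k, To' k ≤ W k := by
    intro k
    induction k with
    | zero => rw [hTo'0]; exact hTo 0
    | succ n ih =>
      rw [hTo'rec]
      refine max_le (hTo _) ?_
      calc To' n + Da n + L (n + 1) ≤ W n + Da n + L (n + 1) := by linarith
        _ ≤ W (n + 1) := hspacing n
  have hbwd : ∀ d k, k + d = K → W k ≤ Ta' k := by
    intro d
    induction d with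
    | zero => intro k hk; simp at hk; subst hk; rw [hTa'K]; exact hTa k
    | succ n ih =>
      intro k hk
      have hkK : k < K := by omega
      have h1 : W (k + 1) ≤ Ta' (k + 1) := ih (k + 1) (by omega)
      rw [hTa'rec k hkK]
      refine le_min (hTa k) ?_
      have := hspacing k
      linarith
  intro k hk
  exact ⟨hfwd k, hbwd (K - k) k (by omega)⟩
end
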